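/- arXiv:1904.01117 — 3 statements merged into one kernel-verified Lean document; each statement's English description precedes it below -/
import Mathlib

section
/- For all expectations f and I, every n ∈ ℕ and every initial state s ∈ Σ, the G_n-measurable function X_n^{f,Φ_f(I)} is a version of the conditional expectation of X_{n+1}^{f,I} given G_n under P_s; that is, for every G ∈ G_n one has ∫_G X_{n+1}^{f,I} dP_s = ∫_G X_n^{f,Φ_f(I)} dP_s (Lebesgue integrals of ℝ≥0∞-valued functions). -/
/-!
A `G_n`-measurable set is a countable disjoint union of cylinders `Cyl π` with `|π| = n + 2`, on
each of which `X_n^{f,Φ_f(I)}` is constant, so it suffices to compare the two integrals over one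
such cylinder. Splitting `Cyl π` into the cylinders `Cyl (π s')`, on which `X_{n+1}^{f,I}` is
constant, and using `p_s(π s') = p_s(π) · stepP(last π, s')`, the left integral becomes
`p_s(π) · ∑_{s'} stepP(last π, s') · X_{n+1}^{f,I}(π s')`. On such runs `X_{n+1}^{f,I}` is `X_n`
with the invariant `x ↦ if x ∈ φ then I(s') else f(x)`, and `X_n` evaluates its invariant only at
`last π`, where the average of these invariants over `s'` is `Φ_f(I)(last π)`.
-/

open MeasureTheory Filter Topology
open scoped Classical ENNReal ENat NNReal

/-! Loop model: states `S`, guard `φ : Set S`, loop-body transition probabilities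
`μ : S → S → ℝ≥0`. Expectations are functions `S → ℝ≥0∞` with the pointwise order. -/

variable {S : Type*}

/-- One-step weakest preexpectation of the loop body:
`wpF μ X s = ∑_{s'} μ s s' * X s'`. -/
noncomputable def wpF (μ : S → S → ℝ≥0) (X : S → ℝ≥0∞) (s : S) : ℝ≥0∞ :=
  ∑' s', (μ s s' : ℝ≥0∞) * X s'

/-- The characteristic function `Φ_f` of the loop `while φ do C` with respect to the
postexpectation `f`. -/
noncomputable def Phi (φ : Set S) (μ : S → S → ℝ≥0) (f : S → ℝ≥0∞)
    (X : S → ℝ≥0∞) (s : S) : ℝ≥0∞ :=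
  if s ∈ φ then wpF μ X s else f s

theorem Phi_mono (φ : Set S) (μ : S → S → ℝ≥0) (f : S → ℝ≥0∞) :
    Monotone (Phi φ μ f) := by
  intro X Y h s
  unfold Phi wpF
  split_ifs with hs
  · exact ENNReal.tsum_le_tsum fun s' => mul_le_mul_right (h s') _
  · exact le_rfl

/-- Least fixed point of the characteristic function `Φ_f`,
i.e. the weakest preexpectation `wp(while φ do C)(f)`. -/
noncomputable def lfpPhi (φ : Set S) (μ : S → S → ℝ≥0) (f : S → ℝ≥0∞) : S → ℝ≥0∞ :=
  OrderHom.lfp ⟨Phi φ μ f, Phi_mono φ μ f⟩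

/-- A finite expectation: `X s < ∞` for all states. -/
def FinExp (X : S → ℝ≥0∞) : Prop := ∀ s, X s < ⊤

/-- A bounded expectation: `X s ≤ c` for some constant `c : ℝ≥0`. -/
def BddExp (X : S → ℝ≥0∞) : Prop := ∃ c : ℝ≥0, ∀ s, X s ≤ (c : ℝ≥0∞)

/-- `I` harmonizes with `f` if `I` agrees with `f` on all terminal states (states
outside the guard). -/
def Harmonizes (φ : Set S) (I f : S → ℝ≥0∞) : Prop := ∀ s ∉ φ, I s = f s

/-- `ΔI`: the expected change of `I` within one loop iteration. -/
noncomputable def dExp (φ : Set S) (μ : S → S → ℝ≥0) (I : S → ℝ≥0∞) (s : S) : ℝ≥0∞ :=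
  if s ∈ φ then ∑' s', (μ s s' : ℝ≥0∞) * ((I s' - I s) ⊔ (I s - I s')) else 0

/-- `I` is conditionally difference bounded if `ΔI` is bounded by a constant. -/
def CondDiffBdd (φ : Set S) (μ : S → S → ℝ≥0) (I : S → ℝ≥0∞) : Prop :=
  ∃ c : ℝ≥0, ∀ s, dExp φ μ I s ≤ (c : ℝ≥0∞)

/-! The loop space `Ω := ℕ → S` with its product σ-algebra (`S` discrete). -/

/-- The cylinder set of a finite sequence of states. -/
def Cyl (π : List S) : Set (ℕ → S) := {ϑ | ∀ i : Fin π.length, ϑ i = π.get i}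

/-- The σ-algebra `F_n`, generated by the cylinder sets of sequences of length `n+1`. -/
def Fn (n : ℕ) : MeasurableSpace (ℕ → S) :=
  MeasurableSpace.generateFrom {A | ∃ π : List S, π.length = n + 1 ∧ A = Cyl π}

/-- The shifted filtration `G_n := F_{n+1}`. -/
def Gn (n : ℕ) : MeasurableSpace (ℕ → S) := Fn (n + 1)

/-- One-step transition probability of the loop: from a state `a` inside the guard move
according to `μ`; a state outside the guard is absorbing. -/
noncomputable def stepP (φ : Set S) (μ : S → S → ℝ≥0) (a b : S) : ℝ≥0 :=
  if a ∈ φ then μ a b else if b = a then 1 else 0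

/-- Product of the one-step transition probabilities along a finite sequence. -/
noncomputable def chainP (φ : Set S) (μ : S → S → ℝ≥0) : List S → ℝ≥0
  | [] => 1
  | [_] => 1
  | a :: b :: rest => stepP φ μ a b * chainP φ μ (b :: rest)

/-- The prefix probability `p_s(π)` of the finite sequence `π` of states, starting the
loop in the state `s`. -/
noncomputable def prefP (φ : Set S) (μ : S → S → ℝ≥0) (s : S) (π : List S) : ℝ≥0 :=
  (if π.head? = some s then 1 else 0) * chainP φ μ π

/-- The looping time `τ`: the first time the run leaves the guard. -/
noncomputable def loopT (φ : Set S) (ϑ : ℕ → S) : ℕ∞ :=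
  sInf {n : ℕ∞ | ∃ m : ℕ, n = (m : ℕ∞) ∧ ϑ m ∉ φ}

/-- The stochastic process `X_n^{f,I}` induced by the invariant `I` (w.r.t. the
postexpectation `f`). -/
noncomputable def Xn (φ : Set S) (f I : S → ℝ≥0∞) (n : ℕ) (ϑ : ℕ → S) : ℝ≥0∞ :=
  if loopT φ ϑ ≤ (n : ℕ∞) then f (ϑ (loopT φ ϑ).toNat) else I (ϑ (n + 1))

/-- The stopped process `X_τ^f`. -/
noncomputable def Xstop (φ : Set S) (f : S → ℝ≥0∞) (ϑ : ℕ → S) : ℝ≥0∞ :=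
  if loopT φ ϑ < ⊤ then f (ϑ (loopT φ ϑ).toNat) else 0

open Function Set

section LoopTime

variable {φ : Set S} {ϑ ϑ' : ℕ → S}

lemma loopT_le_of_notMem {i : ℕ} (hi : ϑ i ∉ φ) : loopT φ ϑ ≤ i := sInf_le ⟨i, rfl, hi⟩

lemma le_loopT_of_forall_mem {k : ℕ} (h : ∀ i < k, ϑ i ∈ φ) : (k : ℕ∞) ≤ loopT φ ϑ :=
  le_sInf <| by
    rintro _ ⟨m, rfl, hm⟩
    exact_mod_cast not_lt.1 fun hmk => hm (h m hmk)

lemma loopT_le_natCast_iff {n : ℕ} : loopT φ ϑ ≤ n ↔ ∃ i ≤ n, ϑ i ∉ φ := by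
  refine ⟨fun h => ?_, fun ⟨i, hin, hi⟩ => (loopT_le_of_notMem hi).trans (by exact_mod_cast hin)⟩
  by_contra! hall
  have := (le_loopT_of_forall_mem (k := n + 1) fun i hi => hall i (by omega)).trans h
  exact absurd this (by norm_cast; omega)

lemma loopT_eq_natCast_iff {k : ℕ} : loopT φ ϑ = k ↔ ϑ k ∉ φ ∧ ∀ i < k, ϑ i ∈ φ := by
  refine ⟨fun h => ?_, fun ⟨hk, hmin⟩ =>
    le_antisymm (loopT_le_of_notMem hk) (le_loopT_of_forall_mem hmin)⟩
  have hmin : ∀ i < k, ϑ i ∈ φ := fun i hik => by_contra fun hi =>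
    ((loopT_le_of_notMem hi).trans_lt (by exact_mod_cast hik)).ne h
  refine ⟨fun hk => ?_, hmin⟩
  have := le_loopT_of_forall_mem (k := k + 1) fun i hi =>
    (Nat.lt_succ_iff_lt_or_eq.1 hi).elim (hmin i) (· ▸ hk)
  rw [h] at this
  exact absurd this (by norm_cast; omega)

lemma loopT_eq_of_eqOn {k : ℕ} (hk : loopT φ ϑ = k) (h : ∀ i ≤ k, ϑ i = ϑ' i) :
    loopT φ ϑ' = k := by
  rw [loopT_eq_natCast_iff, ← h k le_rfl] at *
  exact ⟨hk.1, fun i hi => h i hi.le ▸ hk.2 i hi⟩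

end LoopTime

section InducedProcess

variable {φ : Set S}

lemma dependsOn_Xn (f J : S → ℝ≥0∞) (n : ℕ) : DependsOn (Xn φ f J n) (Iio (n + 2)) := by
  intro ϑ ϑ' h
  have hle : ∀ i ≤ n + 1, ϑ i = ϑ' i := fun i hi => h i (by simp; omega)
  have hτn : loopT φ ϑ ≤ n ↔ loopT φ ϑ' ≤ n := by
    simp only [loopT_le_natCast_iff]
    exact exists_congr fun i => and_congr_right fun hi => by rw [hle i (by omega)]
  unfold Xn
  by_cases hn : loopT φ ϑ ≤ n
  · obtain ⟨k, hk, hkn⟩ := ENat.le_natCast_iff.1 hn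
    rw [if_pos hn, if_pos (hτn.1 hn), hk, loopT_eq_of_eqOn hk fun i hi => hle i (by omega),
      ENat.toNat_natCast, hle k (by omega)]
  · rw [if_neg hn, if_neg (hτn.not.1 hn), hle (n + 1) le_rfl]

lemma Xn_succ (f I : S → ℝ≥0∞) (n : ℕ) (ϑ : ℕ → S) :
    Xn φ f I (n + 1) ϑ = Xn φ f (fun x => if x ∈ φ then I (ϑ (n + 2)) else f x) n ϑ := by
  by_cases hn : loopT φ ϑ ≤ n
  · have hn' : loopT φ ϑ ≤ (n + 1 : ℕ) := hn.trans (by norm_cast; omega)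
    simp only [Xn, if_pos hn, if_pos hn']
  have hmem : ∀ i ≤ n, ϑ i ∈ φ := by simpa [loopT_le_natCast_iff] using hn
  by_cases hφ : ϑ (n + 1) ∈ φ
  · have hn' : ¬ loopT φ ϑ ≤ (n + 1 : ℕ) := by
      rw [loopT_le_natCast_iff]
      rintro ⟨i, hi, hiφ⟩
      obtain rfl | hi := hi.eq_or_lt
      exacts [hiφ hφ, hiφ (hmem i (by omega))]
    simp only [Xn, if_neg hn, if_neg hn', if_pos hφ]
  · have hτ : loopT φ ϑ = (n + 1 : ℕ) :=
      loopT_eq_natCast_iff.2 ⟨hφ, fun i hi => hmem i (by omega)⟩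
    simp only [Xn, hτ, le_refl, if_true, if_neg hφ, ENat.toNat_natCast, ite_self]

end InducedProcess

section Transition

variable {φ : Set S} {μ : S → S → ℝ≥0}

lemma chainP_append_singleton :
    ∀ (l : List S) (hl : l ≠ []) (b : S),
      chainP φ μ (l ++ [b]) = chainP φ μ l * stepP φ μ (l.getLast hl) b
  | [a], _, b => by simp [chainP]
  | a :: c :: rest, _, b => by
    rw [List.cons_append, List.cons_append, chainP, ← List.cons_append,
      chainP_append_singleton (c :: rest) (List.cons_ne_nil _ _), chainP,
      List.getLast_cons (List.cons_ne_nil _ _), mul_assoc]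

lemma prefP_append_singleton (s : S) (l : List S) (hl : l ≠ []) (b : S) :
    prefP φ μ s (l ++ [b]) = prefP φ μ s l * stepP φ μ (l.getLast hl) b := by
  rw [prefP, prefP, List.head?_append_of_ne_nil _ hl, chainP_append_singleton l hl, mul_assoc]

lemma tsum_stepP (hμ : ∀ s, ∑' s', μ s s' = 1) (a : S) :
    ∑' b, (stepP φ μ a b : ℝ≥0∞) = 1 := by
  unfold stepP
  split_ifs with ha
  · have hsum : Summable (μ a) := by
      by_contra h
      simpa [tsum_eq_zero_of_not_summable h] using hμ a
    rw [← ENNReal.coe_tsum hsum, hμ a, ENNReal.coe_one]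
  · simp only [apply_ite, ENNReal.coe_one, ENNReal.coe_zero, tsum_ite_eq]

lemma tsum_stepP_mul_Xn_succ (hμ : ∀ s, ∑' s', μ s s' = 1) (f I : S → ℝ≥0∞) (n : ℕ)
    (ϑ : ℕ → S) :
    ∑' b, (stepP φ μ (ϑ (n + 1)) b : ℝ≥0∞) * Xn φ f I (n + 1) (update ϑ (n + 2) b) =
      Xn φ f (Phi φ μ f I) n ϑ := by
  have hX : ∀ b, Xn φ f I (n + 1) (update ϑ (n + 2) b) =
      Xn φ f (fun x => if x ∈ φ then I b else f x) n ϑ := fun b => by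
    rw [Xn_succ, update_self]
    exact dependsOn_Xn f _ n fun i hi => update_of_ne (by simp at hi; omega) _ _
  simp only [hX]
  unfold Xn
  split_ifs with hτ
  · rw [ENNReal.tsum_mul_right, tsum_stepP hμ, one_mul]
  · by_cases hφ : ϑ (n + 1) ∈ φ
    · simp [hφ, Phi, wpF, stepP]
    · simp only [hφ, if_false, Phi]
      rw [ENNReal.tsum_mul_right, tsum_stepP hμ, one_mul]

end Transition

section Cylinders

def runPrefix (m : ℕ) (ϑ : ℕ → S) : List S := (List.range m).map ϑ

@[simp]
lemma length_runPrefix (m : ℕ) (ϑ : ℕ → S) : (runPrefix m ϑ).length = m := by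
  simp [runPrefix]

lemma runPrefix_eq_runPrefix_iff {m : ℕ} {ϑ ϑ' : ℕ → S} :
    runPrefix m ϑ = runPrefix m ϑ' ↔ ∀ i < m, ϑ i = ϑ' i := by
  simp [runPrefix, List.map_inj_left]

lemma runPrefix_succ (m : ℕ) (ϑ : ℕ → S) : runPrefix (m + 1) ϑ = runPrefix m ϑ ++ [ϑ m] := by
  simp [runPrefix, List.range_succ]

lemma runPrefix_update (m : ℕ) (ϑ : ℕ → S) (b : S) :
    runPrefix (m + 1) (update ϑ m b) = runPrefix m ϑ ++ [b] := by
  rw [runPrefix_succ, update_self, runPrefix_eq_runPrefix_iff.2 fun i hi => update_of_ne hi.ne _ _]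

lemma getLast_runPrefix_succ (m : ℕ) (ϑ : ℕ → S) (h : runPrefix (m + 1) ϑ ≠ []) :
    (runPrefix (m + 1) ϑ).getLast h = ϑ m := by
  simp only [runPrefix_succ, List.getLast_append_singleton]

lemma Cyl_eq_preimage_runPrefix (π : List S) : Cyl π = runPrefix π.length ⁻¹' {π} := by
  ext ϑ
  simp only [Cyl, mem_ofPred_eq, mem_preimage, mem_singleton_iff]
  refine ⟨fun h => List.ext_get (by simp) fun i h₁ h₂ => ?_, fun h i => ?_⟩
  · simpa [runPrefix] using h ⟨i, h₂⟩
  · simpa [runPrefix] using List.getElem_of_eq h (i := i) (by simp)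

lemma mem_Cyl_runPrefix {m : ℕ} {ϑ ϑ₀ : ℕ → S} :
    ϑ ∈ Cyl (runPrefix m ϑ₀) ↔ ∀ i < m, ϑ i = ϑ₀ i := by
  rw [Cyl_eq_preimage_runPrefix, length_runPrefix, mem_preimage, mem_singleton_iff,
    runPrefix_eq_runPrefix_iff]

lemma mem_Cyl_append_singleton {π : List S} {b : S} {ϑ : ℕ → S} :
    ϑ ∈ Cyl (π ++ [b]) ↔ ϑ ∈ Cyl π ∧ ϑ π.length = b := by
  simp only [Cyl_eq_preimage_runPrefix, List.length_append, List.length_singleton,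
    runPrefix_succ, mem_preimage, mem_singleton_iff]
  exact ⟨fun h => by simpa using List.append_inj' h rfl, fun ⟨h₁, h₂⟩ => by rw [h₁, h₂]⟩

lemma Cyl_eq_iUnion_Cyl_append (π : List S) : Cyl π = ⋃ b, Cyl (π ++ [b]) := by
  ext ϑ
  simp [mem_Cyl_append_singleton]

lemma pairwise_disjoint_Cyl_append (π : List S) :
    Pairwise (Disjoint on fun b => Cyl (π ++ [b])) := fun _ _ hb =>
  disjoint_left.2 fun _ h h' =>
    hb ((mem_Cyl_append_singleton.1 h).2.symm.trans (mem_Cyl_append_singleton.1 h').2)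

lemma measurableSet_Cyl [MeasurableSpace S] [MeasurableSingletonClass S] (π : List S) :
    MeasurableSet (Cyl π) := by
  have : Cyl π = ⋂ i : Fin π.length, (fun ϑ => ϑ i) ⁻¹' {π.get i} := by
    ext; simp [Cyl]
  rw [this]
  exact .iInter fun i => measurable_pi_apply _ (measurableSet_singleton _)

lemma Fn_eq_comap [Countable S] (n : ℕ) :
    Fn n = MeasurableSpace.comap (runPrefix (S := S) (n + 1)) ⊤ := by
  refine le_antisymm (MeasurableSpace.generateFrom_le ?_) ?_
  · rintro _ ⟨π, hπ, rfl⟩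
    exact ⟨{π}, trivial, by rw [Cyl_eq_preimage_runPrefix, hπ]⟩
  · rintro _ ⟨A, -, rfl⟩
    rw [← biUnion_preimage_singleton]
    refine .biUnion A.to_countable fun π _ => ?_
    by_cases hπ : π.length = n + 1
    · rw [← hπ, ← Cyl_eq_preimage_runPrefix]
      exact MeasurableSpace.measurableSet_generateFrom ⟨π, hπ, rfl⟩
    · rw [preimage_singleton_eq_empty.2 fun ⟨ϑ, h⟩ => hπ (h ▸ length_runPrefix _ ϑ)]
      exact (Fn n).measurableSet_empty

end Cylinders

lemma Function.FactorsThrough.measurable_comap_top {Ω β γ : Type*} [MeasurableSpace γ]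
    {p : Ω → β} {g : Ω → γ} (h : g.FactorsThrough p) :
    Measurable[MeasurableSpace.comap p ⊤] g := fun B _ =>
  ⟨p '' (g ⁻¹' B), trivial, Set.ext fun _ =>
    ⟨fun ⟨_, hω', hp⟩ => mem_preimage.2 (h hp.symm ▸ hω'), fun hω => ⟨_, hω, rfl⟩⟩⟩

lemma setLIntegral_preimage_congr {Ω β : Type*} [MeasurableSpace Ω] [Countable β]
    {ν : Measure Ω} {p : Ω → β} {F F' : Ω → ℝ≥0∞}
    (hp : ∀ ω, MeasurableSet (p ⁻¹' {p ω}))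
    (h : ∀ ω, ∫⁻ x in p ⁻¹' {p ω}, F x ∂ν = ∫⁻ x in p ⁻¹' {p ω}, F' x ∂ν) (A : Set β) :
    ∫⁻ x in p ⁻¹' A, F x ∂ν = ∫⁻ x in p ⁻¹' A, F' x ∂ν := by
  have hfiber : ∀ b, MeasurableSet (p ⁻¹' {b}) ∧
      ∫⁻ x in p ⁻¹' {b}, F x ∂ν = ∫⁻ x in p ⁻¹' {b}, F' x ∂ν := fun b => by
    by_cases hb : b ∈ range p
    · obtain ⟨ω, rfl⟩ := hb
      exact ⟨hp ω, h ω⟩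
    · simp [preimage_singleton_eq_empty.2 hb]
  simp only [← biUnion_preimage_singleton p A]
  rw [lintegral_biUnion A.to_countable (fun b _ => (hfiber b).1) (pairwiseDisjoint_fiber p A),
    lintegral_biUnion A.to_countable (fun b _ => (hfiber b).1) (pairwiseDisjoint_fiber p A)]
  exact tsum_congr fun b => (hfiber b).2

section Integrals

variable [MeasurableSpace S] {ν : Measure (ℕ → S)} {φ : Set S} {μ : S → S → ℝ≥0}

lemma measure_Cyl_append {s : S} (hν : ∀ π : List S, π ≠ [] → ν (Cyl π) = prefP φ μ s π)
    (π : List S) (hπ : π ≠ []) (b : S) :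
    ν (Cyl (π ++ [b])) = ν (Cyl π) * stepP φ μ (π.getLast hπ) b := by
  rw [hν _ (by simp), hν π hπ, prefP_append_singleton s π hπ, ENNReal.coe_mul]

variable [MeasurableSingletonClass S]

lemma setLIntegral_Cyl_runPrefix {F : (ℕ → S) → ℝ≥0∞} {m : ℕ} (hF : DependsOn F (Iio m))
    (ϑ₀ : ℕ → S) :
    ∫⁻ ϑ in Cyl (runPrefix m ϑ₀), F ϑ ∂ν = F ϑ₀ * ν (Cyl (runPrefix m ϑ₀)) := by
  rw [setLIntegral_congr_fun (measurableSet_Cyl _) fun ϑ hϑ => hF (mem_Cyl_runPrefix.1 hϑ),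
    setLIntegral_const]

variable [Countable S]

lemma setLIntegral_Cyl_Xn_succ (hμ : ∀ s, ∑' s', μ s s' = 1)
    (hν : ∀ (π : List S) (hπ : π ≠ []) (b : S),
      ν (Cyl (π ++ [b])) = ν (Cyl π) * stepP φ μ (π.getLast hπ) b)
    (f I : S → ℝ≥0∞) (n : ℕ) (ϑ₀ : ℕ → S) :
    ∫⁻ ϑ in Cyl (runPrefix (n + 2) ϑ₀), Xn φ f I (n + 1) ϑ ∂ν =
      ∫⁻ ϑ in Cyl (runPrefix (n + 2) ϑ₀), Xn φ f (Phi φ μ f I) n ϑ ∂ν := by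
  set π := runPrefix (n + 2) ϑ₀
  have hπ : π ≠ [] := List.ne_nil_of_length_pos (by simp [π])
  calc ∫⁻ ϑ in Cyl π, Xn φ f I (n + 1) ϑ ∂ν
      = ∑' b, ∫⁻ ϑ in Cyl (π ++ [b]), Xn φ f I (n + 1) ϑ ∂ν := by
        rw [Cyl_eq_iUnion_Cyl_append,
          lintegral_iUnion (fun _ => measurableSet_Cyl _) (pairwise_disjoint_Cyl_append π)]
    _ = ∑' b, Xn φ f I (n + 1) (update ϑ₀ (n + 2) b) *
          (ν (Cyl π) * stepP φ μ (ϑ₀ (n + 1)) b) := by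
        refine tsum_congr fun b => ?_
        rw [← runPrefix_update, setLIntegral_Cyl_runPrefix (dependsOn_Xn f I (n + 1)),
          runPrefix_update, hν π hπ, getLast_runPrefix_succ]
    _ = ν (Cyl π) * ∑' b, (stepP φ μ (ϑ₀ (n + 1)) b : ℝ≥0∞) *
          Xn φ f I (n + 1) (update ϑ₀ (n + 2) b) := by
        rw [← ENNReal.tsum_mul_left]
        exact tsum_congr fun b => by ring
    _ = ∫⁻ ϑ in Cyl π, Xn φ f (Phi φ μ f I) n ϑ ∂ν := by
        rw [tsum_stepP_mul_Xn_succ hμ, setLIntegral_Cyl_runPrefix (dependsOn_Xn f _ n), mul_comm]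

end Integrals

theorem Xn_condExp_general {S : Type*} [Countable S] [MeasurableSpace S] [DiscreteMeasurableSpace S]
    (φ : Set S) (μ : S → S → ℝ≥0) (hμ : ∀ s, ∑' s', μ s s' = 1)
    (P : S → Measure (ℕ → S))
    (hPC : ∀ (s : S) (π : List S), π ≠ [] → P s (Cyl π) = (prefP φ μ s π : ℝ≥0∞))
    (f I : S → ℝ≥0∞) (n : ℕ) (s : S) :
    Measurable[Gn n] (Xn φ f (Phi φ μ f I) n) ∧
    ∀ G : Set (ℕ → S), MeasurableSet[Gn n] G →
      ∫⁻ ϑ in G, Xn φ f I (n + 1) ϑ ∂(P s) =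
        ∫⁻ ϑ in G, Xn φ f (Phi φ μ f I) n ϑ ∂(P s) := by
  have hGn : Gn (S := S) n = MeasurableSpace.comap (runPrefix (n + 2)) ⊤ := Fn_eq_comap (n + 1)
  have hfiber (ϑ₀ : ℕ → S) :
      runPrefix (n + 2) ⁻¹' {runPrefix (n + 2) ϑ₀} = Cyl (runPrefix (n + 2) ϑ₀) := by
    rw [Cyl_eq_preimage_runPrefix, length_runPrefix]
  refine ⟨hGn ▸ FactorsThrough.measurable_comap_top fun _ _ h =>
    dependsOn_Xn f _ n (runPrefix_eq_runPrefix_iff.1 h), fun G hG => ?_⟩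
  rw [hGn] at hG
  obtain ⟨A, -, rfl⟩ := hG
  refine setLIntegral_preimage_congr (fun ϑ₀ => hfiber ϑ₀ ▸ measurableSet_Cyl _) (fun ϑ₀ => ?_) A
  rw [hfiber]
  exact setLIntegral_Cyl_Xn_succ hμ (measure_Cyl_append (hPC s)) f I n ϑ₀

/-- **Relating `X^{f,I}` and `Φ_f`.** The `G_n`-measurable function `X_n^{f,Φ_f(I)}` is a
version of the conditional expectation of `X_{n+1}^{f,I}` given `G_n` under `P_s`. -/
theorem Xn_condExp {S : Type*} [Countable S] [MeasurableSpace S] [DiscreteMeasurableSpace S]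
    (φ : Set S) (μ : S → S → ℝ≥0) (hμ : ∀ s, ∑' s', μ s s' = 1)
    (P : S → Measure (ℕ → S)) (hP : ∀ s, IsProbabilityMeasure (P s))
    (hPC : ∀ (s : S) (π : List S), π ≠ [] → P s (Cyl π) = (prefP φ μ s π : ℝ≥0∞))
    (f I : S → ℝ≥0∞) (n : ℕ) (s : S) :
    Measurable[Gn n] (Xn φ f (Phi φ μ f I) n) ∧
    ∀ G : Set (ℕ → S), MeasurableSet[Gn n] G →
      ∫⁻ ϑ in G, Xn φ f I (n + 1) ϑ ∂(P s) =
        ∫⁻ ϑ in G, Xn φ f (Phi φ μ f I) n ϑ ∂(P s) :=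
  Xn_condExp_general φ μ hμ P hPC f I n s
end

section
/- For all expectations f and I, every n ∈ ℕ and every initial state s ∈ Σ, the expected value of the induced process equals the (n+1)-fold iterate of the characteristic function applied to I: ∫_Ω X_n^{f,I} dP_s = Φ_f^{n+1}(I)(s). -/
open MeasureTheory Filter Topology
open scoped Classical ENNReal ENat NNReal

/-! Loop model: states `S`, guard `φ : Set S`, loop-body transition probabilities
`μ : S → S → ℝ≥0`. Expectations are functions `S → ℝ≥0∞` with the pointwise order. -/

variable {S : Type*}

/-! `X_n^{f,I}` depends only on the first `n + 2` states of a run, so its integral against `P_s`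
is a countable sum over prefixes weighted by the prefix probabilities. Peeling off the first
transition of such a sum reproduces the defining recursion of `Φ_f`: inside the guard it is one
`wp` step of the loop body, outside the guard the state is absorbing and `X_n^{f,I} = f(s)`. -/

lemma ENNReal.tsum_fin_cons {α : Type*} {k : ℕ} (F : (Fin (k + 1) → α) → ℝ≥0∞) :
    ∑' v, F v = ∑' (a : α) (u : Fin k → α), F (Fin.cons a u) := by
  rw [← (Fin.consEquiv fun _ => α).tsum_eq, ← ENNReal.tsum_prod]
  rfl

section LoopingTime

variable {S : Type*} (φ : Set S)

lemma loopT_eq_iInf (ϑ : ℕ → S) : loopT φ ϑ = ⨅ (m : ℕ) (_ : ϑ m ∉ φ), (m : ℕ∞) := by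
  have : {n : ℕ∞ | ∃ m : ℕ, n = m ∧ ϑ m ∉ φ} = (fun m : ℕ => (m : ℕ∞)) '' {m | ϑ m ∉ φ} := by
    ext n
    simp [eq_comm, and_comm]
  rw [loopT, this, sInf_image]
  rfl

lemma loopT_eq_zero {ϑ : ℕ → S} (h : ϑ 0 ∉ φ) : loopT φ ϑ = 0 :=
  nonpos_iff_eq_zero.mp (loopT_eq_iInf φ ϑ ▸ iInf₂_le 0 h)

lemma loopT_eq_shift_add_one {ϑ : ℕ → S} (h : ϑ 0 ∈ φ) :
    loopT φ ϑ = loopT φ (fun k => ϑ (k + 1)) + 1 := by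
  simp only [loopT_eq_iInf, ENat.iInf_add]
  rw [← inf_iInf_nat_succ]
  simp [h]

variable (f I : S → ℝ≥0∞)

lemma Xn_of_notMem {ϑ : ℕ → S} (h : ϑ 0 ∉ φ) (n : ℕ) : Xn φ f I n ϑ = f (ϑ 0) := by
  simp [Xn, loopT_eq_zero φ h]

lemma Xn_zero_of_mem {ϑ : ℕ → S} (h : ϑ 0 ∈ φ) : Xn φ f I 0 ϑ = I (ϑ 1) := by
  simp [Xn, loopT_eq_shift_add_one φ h]

lemma Xn_succ_of_mem {ϑ : ℕ → S} (h : ϑ 0 ∈ φ) (n : ℕ) :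
    Xn φ f I (n + 1) ϑ = Xn φ f I n (fun k => ϑ (k + 1)) := by
  unfold Xn
  rw [loopT_eq_shift_add_one φ h]
  generalize loopT φ (fun k => ϑ (k + 1)) = t
  cases t using ENat.recTopCoe with
  | top => simp
  | coe k => simp only [← Nat.cast_add_one, ENat.toNat_natCast, Nat.cast_le, add_le_add_iff_right]

end LoopingTime

section PathSums

variable {S : Type*} (φ : Set S) (μ : S → S → ℝ≥0)

noncomputable def XnFin (f I : S → ℝ≥0∞) : (n : ℕ) → (Fin (n + 2) → S) → ℝ≥0∞
  | 0, v => if v 0 ∈ φ then I (v 1) else f (v 0)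
  | n + 1, v => if v 0 ∈ φ then XnFin f I n (Fin.tail v) else f (v 0)

lemma XnFin_cons_of_notMem (f I : S → ℝ≥0∞) (n : ℕ) {s : S} (h : s ∉ φ)
    (u : Fin (n + 1) → S) : XnFin φ f I n (Fin.cons s u) = f s := by
  cases n <;> simp [XnFin, h]

lemma Xn_eq_XnFin (f I : S → ℝ≥0∞) (n : ℕ) (ϑ : ℕ → S) :
    Xn φ f I n ϑ = XnFin φ f I n (fun i => ϑ i) := by
  induction n generalizing ϑ with
  | zero =>
    by_cases h : ϑ 0 ∈ φ
    · simp [Xn_zero_of_mem φ f I h, XnFin, h]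
    · simp [Xn_of_notMem φ f I h, XnFin, h]
  | succ n ih =>
    by_cases h : ϑ 0 ∈ φ
    · rw [Xn_succ_of_mem φ f I h, ih]
      rw [XnFin]
      exact (if_pos h).symm
    · simp [Xn_of_notMem φ f I h, XnFin, h]

/-- The expectation of `G` over the first `k + 1` states of a run of the loop from `s`. -/
noncomputable def pathExpect (s : S) (k : ℕ) (G : (Fin (k + 1) → S) → ℝ≥0∞) : ℝ≥0∞ :=
  ∑' u : Fin k → S, (chainP φ μ (s :: List.ofFn u) : ℝ≥0∞) * G (Fin.cons s u)

lemma pathExpect_zero (s : S) (G : (Fin 1 → S) → ℝ≥0∞) :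
    pathExpect φ μ s 0 G = G (fun _ => s) := by
  rw [pathExpect, (hasSum_unique _).tsum_eq]
  simp only [List.ofFn_zero, chainP, ENNReal.coe_one, one_mul]
  congr 1
  funext i
  rw [Fin.fin_one_eq_zero i, Fin.cons_zero]

lemma pathExpect_succ (s : S) (k : ℕ) (G : (Fin (k + 2) → S) → ℝ≥0∞) :
    pathExpect φ μ s (k + 1) G =
      ∑' b, (stepP φ μ s b : ℝ≥0∞) * pathExpect φ μ b k (fun w => G (Fin.cons s w)) := by
  rw [pathExpect, ENNReal.tsum_fin_cons]
  refine tsum_congr fun b => ?_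
  rw [pathExpect, ← ENNReal.tsum_mul_left]
  refine tsum_congr fun t => ?_
  simp [chainP, mul_assoc]

lemma tsum_stepP_mul_of_notMem {s : S} (h : s ∉ φ) (g : S → ℝ≥0∞) :
    ∑' b, (stepP φ μ s b : ℝ≥0∞) * g b = g s := by
  rw [tsum_eq_single s fun b hb => by simp [stepP, h, hb]]
  simp [stepP, h]

lemma pathExpect_XnFin (f I : S → ℝ≥0∞) (n : ℕ) (s : S) :
    pathExpect φ μ s (n + 1) (XnFin φ f I n) = (Phi φ μ f)^[n + 1] I s := by
  induction n generalizing s with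
  | zero =>
    rw [pathExpect_succ, Function.iterate_one, Phi]
    by_cases h : s ∈ φ
    · simp [pathExpect_zero, XnFin, h, stepP, wpF]
    · simp [pathExpect_zero, XnFin, h, tsum_stepP_mul_of_notMem]
  | succ n ih =>
    rw [pathExpect_succ, Function.iterate_succ_apply', Phi]
    by_cases h : s ∈ φ
    · simp [XnFin, h, stepP, wpF, ← ih]
    · -- `s` is absorbing, so the induction hypothesis at `s` itself evaluates the remaining sum.
      have hconst : pathExpect φ μ s (n + 1) (fun _ => f s) = f s :=
        calc pathExpect φ μ s (n + 1) (fun _ => f s)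
            = pathExpect φ μ s (n + 1) (XnFin φ f I n) :=
              tsum_congr fun u => by rw [XnFin_cons_of_notMem φ f I n h]
          _ = f s := by rw [ih, Function.iterate_succ_apply', Phi, if_neg h]
      simp only [h, if_false, tsum_stepP_mul_of_notMem φ μ h, XnFin_cons_of_notMem φ f I (n + 1) h,
        hconst]

end PathSums

section CylinderIntegrals

lemma Cyl_ofFn {S : Type*} {k : ℕ} (v : Fin k → S) :
    Cyl (List.ofFn v) = (fun (ϑ : ℕ → S) (i : Fin k) => ϑ i) ⁻¹' {v} := by
  ext ϑ
  simp [Cyl, funext_iff, Fin.forall_iff]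

variable {S : Type*} [Countable S] [MeasurableSpace S] [DiscreteMeasurableSpace S]

lemma lintegral_comp_restrict (P : Measure (ℕ → S)) (k : ℕ) (G : (Fin k → S) → ℝ≥0∞) :
    ∫⁻ ϑ, G (fun i => ϑ i) ∂P = ∑' v, G v * P (Cyl (List.ofFn v)) := by
  have hr : Measurable fun (ϑ : ℕ → S) (i : Fin k) => ϑ i :=
    measurable_pi_lambda _ fun i => measurable_pi_apply _
  rw [← lintegral_map (measurable_of_countable G) hr, lintegral_countable']
  refine tsum_congr fun v => ?_
  rw [Measure.map_apply hr (measurableSet_singleton v), Cyl_ofFn]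

lemma lintegral_comp_restrict_eq_pathExpect (φ : Set S) (μ : S → S → ℝ≥0) {P : Measure (ℕ → S)}
    {s : S} (hPC : ∀ π : List S, π ≠ [] → P (Cyl π) = prefP φ μ s π) (k : ℕ)
    (G : (Fin (k + 1) → S) → ℝ≥0∞) :
    ∫⁻ ϑ, G (fun i => ϑ i) ∂P = pathExpect φ μ s k G := by
  rw [lintegral_comp_restrict, ENNReal.tsum_fin_cons, tsum_eq_single s]
  · refine tsum_congr fun u => ?_
    rw [List.ofFn_cons, hPC _ (List.cons_ne_nil _ _)]
    simp [prefP, mul_comm]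
  · intro a ha
    refine ENNReal.tsum_eq_zero.mpr fun u => ?_
    rw [List.ofFn_cons, hPC _ (List.cons_ne_nil _ _)]
    simp [prefP, ha]

end CylinderIntegrals

theorem Xn_expectation_general {S : Type*} [Countable S] [MeasurableSpace S] [DiscreteMeasurableSpace S]
    (φ : Set S) (μ : S → S → ℝ≥0)
    (P : S → Measure (ℕ → S))
    (hPC : ∀ (s : S) (π : List S), π ≠ [] → P s (Cyl π) = (prefP φ μ s π : ℝ≥0∞))
    (f I : S → ℝ≥0∞) (n : ℕ) (s : S) :
    ∫⁻ ϑ, Xn φ f I n ϑ ∂(P s) = (Phi φ μ f)^[n + 1] I s := by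
  calc ∫⁻ ϑ, Xn φ f I n ϑ ∂(P s)
      = ∫⁻ ϑ, XnFin φ f I n (fun i => ϑ i) ∂(P s) := lintegral_congr (Xn_eq_XnFin φ f I n)
    _ = pathExpect φ μ s (n + 1) (XnFin φ f I n) :=
        lintegral_comp_restrict_eq_pathExpect φ μ (hPC s) _ _
    _ = (Phi φ μ f)^[n + 1] I s := pathExpect_XnFin φ μ f I n s

/-- **Expected values of the induced process are iterates of `Φ_f`:**
`E_s[X_n^{f,I}] = Φ_f^{n+1}(I)(s)`. -/
theorem Xn_expectation {S : Type*} [Countable S] [MeasurableSpace S] [DiscreteMeasurableSpace S]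
    (φ : Set S) (μ : S → S → ℝ≥0) (hμ : ∀ s, ∑' s', μ s s' = 1)
    (P : S → Measure (ℕ → S)) (hP : ∀ s, IsProbabilityMeasure (P s))
    (hPC : ∀ (s : S) (π : List S), π ≠ [] → P s (Cyl π) = (prefP φ μ s π : ℝ≥0∞))
    (f I : S → ℝ≥0∞) (n : ℕ) (s : S) :
    ∫⁻ ϑ, Xn φ f I n ϑ ∂(P s) = (Phi φ μ f)^[n + 1] I s :=
  Xn_expectation_general φ μ P hPC f I n s
end

section
/- Optional Stopping Theorem for weakest preexpectations, case (a): let f be a finite expectation and let I be a finite expectation with I ⪯ Φ_f(I) (a subinvariant) such that Φ_fⁿ(I) is finite for every n ∈ ℕ. If the looping time is almost surely bounded from every initial state, i.e., for every s ∈ Σ there exists N(s) ∈ ℕ with P_s(τ ≤ N(s)) = 1, then I ⪯ lfp Φ_f. -/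
open MeasureTheory Filter Topology
open scoped Classical ENNReal ENat NNReal

/-! Loop model: states `S`, guard `φ : Set S`, loop-body transition probabilities
`μ : S → S → ℝ≥0`. Expectations are functions `S → ℝ≥0∞` with the pointwise order. -/

variable {S : Type*}

/-! `Φ_f` is affine: `Φ_f X = Φ_f 0 + T X`, where `T = guardedWp` is the loop body's `wp` cut off outside
the guard, hence `Φ_fⁿ I = Φ_fⁿ 0 + Tⁿ I`. The value `(Tⁿ I) s` only involves runs from `s`
that stay in the guard for `n` steps; if `τ ≤ N` holds `P_s`-almost surely, every such run
with `n = N + 1` has probability zero, so `(Tⁿ I) s = 0`. Subinvariance then gives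
`I ≤ Φ_fⁿ I = Φ_fⁿ 0 ≤ lfp Φ_f` at `s`. -/

noncomputable def guardedWp (φ : Set S) (μ : S → S → ℝ≥0) (X : S → ℝ≥0∞) (s : S) : ℝ≥0∞ :=
  if s ∈ φ then wpF μ X s else 0

section Iterates

variable (φ : Set S) (μ : S → S → ℝ≥0)

lemma wpF_add (X Y : S → ℝ≥0∞) : wpF μ (X + Y) = wpF μ X + wpF μ Y := by
  ext s
  simp only [wpF, Pi.add_apply, mul_add, ENNReal.tsum_add]

lemma guardedWp_add (X Y : S → ℝ≥0∞) :
    guardedWp φ μ (X + Y) = guardedWp φ μ X + guardedWp φ μ Y := by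
  ext s
  by_cases hs : s ∈ φ <;> simp [guardedWp, hs, wpF_add]

lemma Phi_eq_Phi_zero_add_guardedWp (f X : S → ℝ≥0∞) :
    Phi φ μ f X = Phi φ μ f 0 + guardedWp φ μ X := by
  ext s
  by_cases hs : s ∈ φ <;> simp [Phi, guardedWp, wpF, hs]

lemma Phi_iterate_eq_add_guardedWp_iterate (f X : S → ℝ≥0∞) (n : ℕ) :
    (Phi φ μ f)^[n] X = (Phi φ μ f)^[n] 0 + (guardedWp φ μ)^[n] X := by
  induction n with
  | zero => simp
  | succ n ih =>
    simp only [Function.iterate_succ_apply']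
    rw [ih, Phi_eq_Phi_zero_add_guardedWp, guardedWp_add, ← add_assoc,
      ← Phi_eq_Phi_zero_add_guardedWp]

lemma Phi_iterate_zero_le_lfpPhi (f : S → ℝ≥0∞) (n : ℕ) :
    (Phi φ μ f)^[n] 0 ≤ lfpPhi φ μ f :=
  calc (Phi φ μ f)^[n] 0 ≤ (Phi φ μ f)^[n] (lfpPhi φ μ f) :=
        (Phi_mono φ μ f).iterate n zero_le
    _ = lfpPhi φ μ f := (OrderHom.isFixedPt_lfp ⟨Phi φ μ f, Phi_mono φ μ f⟩).iterate n

lemma guardedWp_iterate_eq_zero {n : ℕ} {s : S} (X : S → ℝ≥0∞)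
    (hpaths : ∀ π : List S, π.length = n → (∀ a ∈ (s :: π).dropLast, a ∈ φ) →
      chainP φ μ (s :: π) = 0) :
    (guardedWp φ μ)^[n] X s = 0 := by
  induction n generalizing s with
  | zero => simpa [chainP] using hpaths [] rfl
  | succ n ih =>
    rw [Function.iterate_succ_apply']
    by_cases hs : s ∈ φ
    · simp only [guardedWp, hs, if_true, wpF, ENNReal.tsum_eq_zero, mul_eq_zero,
        ENNReal.coe_eq_zero]
      intro s'
      refine or_iff_not_imp_left.2 fun hμ => ih fun π hπ hguard => ?_
      have hstep := hpaths (s' :: π) (by simp [hπ]) (by simpa [hs] using hguard)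
      simpa [chainP, stepP, hs, hμ] using hstep
    · simp [guardedWp, hs]

end Iterates

section LoopingTime

variable {φ : Set S}

lemma loopT_le_iff {ϑ : ℕ → S} {N : ℕ} : loopT φ ϑ ≤ N ↔ ∃ m ≤ N, ϑ m ∉ φ := by
  rw [← ENat.lt_add_one_iff (ENat.natCast_ne_top N), loopT, sInf_lt_iff]
  constructor
  · rintro ⟨_, ⟨m, rfl, hm⟩, hlt⟩
    exact ⟨m, by exact_mod_cast (ENat.lt_add_one_iff (ENat.natCast_ne_top N)).1 hlt, hm⟩
  · rintro ⟨m, hmN, hm⟩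
    exact ⟨m, ⟨m, rfl, hm⟩, by exact_mod_cast Nat.lt_succ_of_le hmN⟩

lemma measurableSet_loopT_le [MeasurableSpace S] [DiscreteMeasurableSpace S] (N : ℕ) :
    MeasurableSet {ϑ : ℕ → S | loopT φ ϑ ≤ N} := by
  have hset : {ϑ : ℕ → S | loopT φ ϑ ≤ N} = ⋃ m ∈ Finset.range (N + 1), (· m) ⁻¹' φᶜ := by
    ext ϑ
    simp [loopT_le_iff]
  rw [hset]
  exact Finset.measurableSet_biUnion _ fun m _ =>
    measurable_pi_apply m (MeasurableSet.of_discrete (s := φᶜ))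

lemma not_loopT_le_of_mem_Cyl {π : List S} {ϑ : ℕ → S} (hϑ : ϑ ∈ Cyl π)
    (hguard : ∀ a ∈ π.dropLast, a ∈ φ) {N : ℕ} (hN : N + 1 < π.length) :
    ¬ loopT φ ϑ ≤ N := by
  rw [loopT_le_iff]
  rintro ⟨m, hmN, hm⟩
  have hϑm : ϑ m = π.dropLast[m]'(by simp; omega) := by
    rw [List.getElem_dropLast]
    exact hϑ ⟨m, by omega⟩
  exact hm (hϑm ▸ hguard _ (List.getElem_mem _))

lemma chainP_eq_zero_of_measure_loopT_le [MeasurableSpace S] [DiscreteMeasurableSpace S]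
    {μ : S → S → ℝ≥0} {s : S} {P : Measure (ℕ → S)} [IsProbabilityMeasure P]
    (hPC : ∀ π : List S, π ≠ [] → P (Cyl π) = (prefP φ μ s π : ℝ≥0∞))
    {N : ℕ} (hN : P {ϑ | loopT φ ϑ ≤ N} = 1) {π : List S} (hπ : π.length = N + 1)
    (hguard : ∀ a ∈ (s :: π).dropLast, a ∈ φ) :
    chainP φ μ (s :: π) = 0 := by
  have hcompl : P {ϑ | loopT φ ϑ ≤ N}ᶜ = 0 := by
    rw [prob_compl_eq_zero_iff (measurableSet_loopT_le N), hN]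
  have hcyl : P (Cyl (s :: π)) = 0 :=
    measure_mono_null (fun ϑ hϑ => not_loopT_le_of_mem_Cyl hϑ hguard (by simp [hπ])) hcompl
  rw [hPC _ (List.cons_ne_nil _ _), prefP, List.head?_cons, if_pos rfl, one_mul] at hcyl
  exact_mod_cast hcyl

end LoopingTime

theorem ost_wp_case_a_general {S : Type*} [MeasurableSpace S] [DiscreteMeasurableSpace S]
    (φ : Set S) (μ : S → S → ℝ≥0)
    (P : S → Measure (ℕ → S)) (hP : ∀ s, IsProbabilityMeasure (P s))
    (hPC : ∀ (s : S) (π : List S), π ≠ [] → P s (Cyl π) = (prefP φ μ s π : ℝ≥0∞))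
    (f I : S → ℝ≥0∞) (hsub : I ≤ Phi φ μ f I)
    (hbdd : ∀ s : S, ∃ N : ℕ, P s {ϑ | loopT φ ϑ ≤ (N : ℕ∞)} = 1) :
    I ≤ lfpPhi φ μ f := by
  intro s
  have := hP s
  obtain ⟨N, hN⟩ := hbdd s
  have hpaths : ∀ π : List S, π.length = N + 1 → (∀ a ∈ (s :: π).dropLast, a ∈ φ) →
      chainP φ μ (s :: π) = 0 :=
    fun _ hπ hguard => chainP_eq_zero_of_measure_loopT_le (hPC s) hN hπ hguard
  calc I s ≤ (Phi φ μ f)^[N + 1] I s :=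
        (Phi_mono φ μ f).monotone_iterate_of_le_map hsub (Nat.zero_le _) s
    _ = (Phi φ μ f)^[N + 1] 0 s + (guardedWp φ μ)^[N + 1] I s :=
        congrFun (Phi_iterate_eq_add_guardedWp_iterate φ μ f I _) s
    _ = (Phi φ μ f)^[N + 1] 0 s := by rw [guardedWp_iterate_eq_zero φ μ I hpaths, add_zero]
    _ ≤ lfpPhi φ μ f s := Phi_iterate_zero_le_lfpPhi φ μ f (N + 1) s

/-- **Optional Stopping Theorem for weakest preexpectations, case (a).** A finite
subinvariant `I` (w.r.t. a finite postexpectation `f`) with all iterates `Φ_fⁿ(I)` finite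
is a lower bound on `lfp Φ_f`, provided the looping time is almost surely bounded from
every initial state. -/
theorem ost_wp_case_a {S : Type*} [Countable S] [MeasurableSpace S] [DiscreteMeasurableSpace S]
    (φ : Set S) (μ : S → S → ℝ≥0) (hμ : ∀ s, ∑' s', μ s s' = 1)
    (P : S → Measure (ℕ → S)) (hP : ∀ s, IsProbabilityMeasure (P s))
    (hPC : ∀ (s : S) (π : List S), π ≠ [] → P s (Cyl π) = (prefP φ μ s π : ℝ≥0∞))
    (f I : S → ℝ≥0∞) (hf : FinExp f) (hI : FinExp I) (hsub : I ≤ Phi φ μ f I)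
    (hfin : ∀ n : ℕ, FinExp ((Phi φ μ f)^[n] I))
    (hbdd : ∀ s : S, ∃ N : ℕ, P s {ϑ | loopT φ ϑ ≤ (N : ℕ∞)} = 1) :
    I ≤ lfpPhi φ μ f :=
  ost_wp_case_a_general φ μ P hP hPC f I hsub hbdd
end
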